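/- arXiv:1701.02193 — 2 statements merged into one kernel-verified Lean document; each statement's English description precedes it below -/
import Mathlib

section
/- In Ruleset B of Quantum Nim (superpositions of at least two distinct classical moves are required, except that a single classical move may be played when it is the only classical move legal in any realisation), a superposition of single Nim heaps whose largest heap has size k has Grundy value: * (i.e. 1) if k = 1; 0 if k = 2; and k−1 if k ≥ 3. -/
namespace QGame

variable {Pos Move : Type} [DecidableEq Pos]

/-- Result of applying the superposed move `M` (a finite set of classical move
labels) to the superposition `S` of classical positions: the set of all results
of a classical move of `M` applied to a realisation where it is legal. -/
def qApply (Γ : Pos → Move → Option Pos) (S : Finset Pos) (M : Finset Move) :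
    Finset Pos :=
  S.biUnion fun G => M.biUnion fun m => (Γ G m).toFinset

/-- The classical move `m` is legal in at least one realisation of `S`. -/
def MoveLegal (Γ : Pos → Move → Option Pos) (S : Finset Pos) (m : Move) : Prop :=
  ∃ G ∈ S, (Γ G m).isSome

/-- Basic legality of a Q-move: nonempty, and each classical move is legal
in at least one realisation. -/
def QBase (Γ : Pos → Move → Option Pos) (S : Finset Pos) (M : Finset Move) : Prop :=
  M.Nonempty ∧ ∀ m ∈ M, MoveLegal Γ S m

/-- Ruleset A : superpositions of at least two distinct classical moves. -/
def QLegalA (Γ : Pos → Move → Option Pos) (S : Finset Pos) (M : Finset Move) : Prop :=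
  QBase Γ S M ∧ 2 ≤ M.card

/-- Ruleset B : as A, except a lone classical move may be played when it is the
only legal classical move over all realisations. -/
def QLegalB (Γ : Pos → Move → Option Pos) (S : Finset Pos) (M : Finset Move) : Prop :=
  QBase Γ S M ∧ (2 ≤ M.card ∨ ∀ m, MoveLegal Γ S m → m ∈ M)

/-- Ruleset C : a lone classical move must be legal in every realisation. -/
def QLegalC (Γ : Pos → Move → Option Pos) (S : Finset Pos) (M : Finset Move) : Prop :=
  QBase Γ S M ∧ (2 ≤ M.card ∨ ∀ G ∈ S, ∀ m ∈ M, (Γ G m).isSome)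

/-- A single classical move is C'-allowed: legal in every realisation where the
mover still has at least one classical move. -/
def SingleLegalC' (Γ : Pos → Move → Option Pos) (S : Finset Pos) (m : Move) : Prop :=
  ∀ G ∈ S, (∃ m', (Γ G m').isSome) → (Γ G m).isSome

/-- Ruleset C'. -/
def QLegalC' (Γ : Pos → Move → Option Pos) (S : Finset Pos) (M : Finset Move) : Prop :=
  QBase Γ S M ∧ (2 ≤ M.card ∨ ∀ m ∈ M, SingleLegalC' Γ S m)

/-- Ruleset D : any nonempty superposition of legal classical moves. -/
def QLegalD (Γ : Pos → Move → Option Pos) (S : Finset Pos) (M : Finset Move) : Prop :=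
  QBase Γ S M

def optA (Γ : Pos → Move → Option Pos) (S : Finset Pos) : Set (Finset Pos) :=
  {T | ∃ M, QLegalA Γ S M ∧ T = qApply Γ S M}
def optB (Γ : Pos → Move → Option Pos) (S : Finset Pos) : Set (Finset Pos) :=
  {T | ∃ M, QLegalB Γ S M ∧ T = qApply Γ S M}
def optC (Γ : Pos → Move → Option Pos) (S : Finset Pos) : Set (Finset Pos) :=
  {T | ∃ M, QLegalC Γ S M ∧ T = qApply Γ S M}
def optC' (Γ : Pos → Move → Option Pos) (S : Finset Pos) : Set (Finset Pos) :=
  {T | ∃ M, QLegalC' Γ S M ∧ T = qApply Γ S M}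
def optD (Γ : Pos → Move → Option Pos) (S : Finset Pos) : Set (Finset Pos) :=
  {T | ∃ M, QLegalD Γ S M ∧ T = qApply Γ S M}

/-- `NPos opt p` : under normal play, the player to move from `p` wins,
i.e. there is a move to a position all of whose options are again `NPos`
(that is, to a previous-player-win position). -/
inductive NPos {α : Type*} (opt : α → Set α) : α → Prop where
  | mk (p q : α) (hq : q ∈ opt p) (h : ∀ r, r ∈ opt q → NPos opt r) :
      NPos opt p

/-- `PPos opt p` : `p` is a previous-player win (the second player wins)
under normal play: every option is a next-player win. -/
def PPos {α : Type*} (opt : α → Set α) (p : α) : Prop :=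
  ∀ q ∈ opt p, NPos opt q

/-- Options of the sum of a game with a classical Nim heap: move in the game
component, or decrease the heap component. -/
def sumNimOpt {α : Type*} (opt : α → Set α) : α × ℕ → Set (α × ℕ) :=
  fun x => {y | (y.1 ∈ opt x.1 ∧ y.2 = x.2) ∨ (y.1 = x.1 ∧ y.2 < x.2)}

/-- `HasGrundy opt p n` : position `p` has Sprague–Grundy value `n` (the value
obtained by the mex rule). By the Sprague–Grundy theorem this holds iff the sum
of `p` with a Nim heap of `n` tokens is a previous-player win. -/
def HasGrundy {α : Type*} (opt : α → Set α) (p : α) (n : ℕ) : Prop :=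
  PPos (sumNimOpt opt) (p, n)

/-- Classical single-heap Nim: from a heap of `n` tokens, the move labelled `x`
removes `x` tokens, legal when `1 ≤ x ≤ n`. -/
def nimΓ : ℕ → ℕ → Option ℕ := fun n x =>
  if 1 ≤ x ∧ x ≤ n then some (n - x) else none

end QGame

/-!
By the Sprague–Grundy mex rule it suffices to exhibit a value function `g` on positions such that
no option of `p` has value `g p` while every smaller value is attained by an option. In Ruleset B
every classical move lowers the largest heap, so a position is governed by its largest heap `k`.
For `k ≥ 3`, the pair of moves `{k - j, k - j + 1}` leads to largest heap exactly `j`, for any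
`1 ≤ j < k`; from `k = 1` the lone move `1` is allowed and leads to `0`; from `k = 2` every Q-move
contains the move `1` (either directly, or because two distinct moves in `{1, 2}` are needed),
so the largest heap becomes `1`. The values `1, 0, 2, 3, …` at `k = 1, 2, 3, 4, …` then satisfy
the mex rule.
-/

namespace QGame

theorem hasGrundy_of_mex {α : Type*} {opt : α → Set α} (hwf : WellFounded fun q p => q ∈ opt p)
    (g : α → ℕ) (hne : ∀ p, ∀ q ∈ opt p, g q ≠ g p)
    (hmex : ∀ p, ∀ n < g p, ∃ q ∈ opt p, g q = n) (p : α) :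
    HasGrundy opt p (g p) := by
  have hwf' : WellFounded fun y x => y ∈ sumNimOpt opt x :=
    Subrelation.wf (fun {y x} (h : (_ ∧ _) ∨ (_ ∧ _)) => Prod.gameAdd_iff.2 (h.imp id And.symm))
      (hwf.prod_gameAdd wellFounded_lt)
  suffices key : ∀ x : α × ℕ, (x.2 = g x.1 → PPos (sumNimOpt opt) x) ∧
      (x.2 ≠ g x.1 → NPos (sumNimOpt opt) x) from (key (p, g p)).1 rfl
  intro x
  induction x using hwf'.induction with
  | _ x ih =>
    obtain ⟨p, n⟩ := x
    dsimp only
    constructor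
    · rintro rfl ⟨q, m⟩ hqm
      rcases hqm with ⟨hq, rfl : m = g p⟩ | ⟨rfl : q = p, hm : m < g q⟩
      · exact (ih (q, g p) (Or.inl ⟨hq, rfl⟩)).2 (hne p q hq).symm
      · exact (ih (q, m) (Or.inr ⟨rfl, hm⟩)).2 hm.ne
    · intro hn
      rcases lt_or_gt_of_ne hn with hlt | hgt
      · obtain ⟨q, hq, rfl⟩ := hmex p n hlt
        exact ⟨_, (q, g q), Or.inl ⟨hq, rfl⟩, (ih (q, g q) (Or.inl ⟨hq, rfl⟩)).1 rfl⟩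
      · exact ⟨_, (p, g p), Or.inr ⟨rfl, hgt⟩, (ih (p, g p) (Or.inr ⟨rfl, hgt⟩)).1 rfl⟩

theorem nimΓ_isSome_iff {s m : ℕ} : (nimΓ s m).isSome ↔ 1 ≤ m ∧ m ≤ s := by
  unfold nimΓ
  split <;> simp_all

theorem mem_qApply_nimΓ {S M : Finset ℕ} {t : ℕ} :
    t ∈ qApply nimΓ S M ↔ ∃ s ∈ S, ∃ m ∈ M, 1 ≤ m ∧ m ≤ s ∧ t = s - m := by
  simp only [qApply, Finset.mem_biUnion, Option.mem_toFinset, Option.mem_def, nimΓ]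
  grind

theorem sup_id_mem_of_pos {S : Finset ℕ} (h : 0 < S.sup id) : S.sup id ∈ S := by
  obtain rfl | hS := S.eq_empty_or_nonempty
  · simp at h
  · have := S.max'_mem hS
    rwa [Finset.max'_eq_sup', Finset.sup'_eq_sup] at this

theorem moveLegal_nimΓ_iff {S : Finset ℕ} {m : ℕ} :
    MoveLegal nimΓ S m ↔ 1 ≤ m ∧ m ≤ S.sup id := by
  constructor
  · rintro ⟨s, hs, h⟩
    rw [nimΓ_isSome_iff] at h
    exact ⟨h.1, h.2.trans (Finset.le_sup (f := id) hs)⟩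
  · rintro ⟨h1, h2⟩
    exact ⟨S.sup id, sup_id_mem_of_pos (by omega), nimΓ_isSome_iff.2 ⟨h1, h2⟩⟩

theorem sup_qApply_nimΓ_le {S M : Finset ℕ} (m₀ : ℕ) (hM : ∀ m ∈ M, m₀ ≤ m) :
    (qApply nimΓ S M).sup id ≤ S.sup id - m₀ := by
  refine Finset.sup_le fun t ht => ?_
  obtain ⟨s, hs, m, hm, -, -, rfl⟩ := mem_qApply_nimΓ.1 ht
  have := Finset.le_sup (f := id) hs
  have := hM m hm
  simp only [id] at *
  omega

theorem sub_le_sup_qApply_nimΓ {S M : Finset ℕ} {m : ℕ} (hm : m ∈ M) (h1 : 1 ≤ m)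
    (hle : m ≤ S.sup id) : S.sup id - m ≤ (qApply nimΓ S M).sup id :=
  Finset.le_sup (f := id) (mem_qApply_nimΓ.2 ⟨_, sup_id_mem_of_pos (by omega), m, hm, h1, hle, rfl⟩)

theorem sup_lt_of_mem_optB {S T : Finset ℕ} (hT : T ∈ optB nimΓ S) : T.sup id < S.sup id := by
  obtain ⟨M, ⟨⟨⟨m₀, hm₀⟩, hlegal⟩, -⟩, rfl⟩ := hT
  have h₀ := moveLegal_nimΓ_iff.1 (hlegal m₀ hm₀)
  have := sup_qApply_nimΓ_le (S := S) 1 fun m hm => (moveLegal_nimΓ_iff.1 (hlegal m hm)).1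
  omega

theorem exists_mem_optB_sup_eq {S : Finset ℕ} {j : ℕ} (hj : 1 ≤ j) (hjk : j < S.sup id) :
    ∃ T ∈ optB nimΓ S, T.sup id = j := by
  set k := S.sup id
  have hcard : ({k - j, k - j + 1} : Finset ℕ).card = 2 := Finset.card_pair (by omega)
  refine ⟨_, ⟨{k - j, k - j + 1}, ⟨⟨by simp, fun m hm => ?_⟩, Or.inl hcard.ge⟩, rfl⟩, ?_⟩
  · simp only [Finset.mem_insert, Finset.mem_singleton] at hm
    rw [moveLegal_nimΓ_iff]
    omega
  · have := sup_qApply_nimΓ_le (S := S) (M := {k - j, k - j + 1}) (k - j)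
      (by intro m hm; simp only [Finset.mem_insert, Finset.mem_singleton] at hm; omega)
    have := sub_le_sup_qApply_nimΓ (S := S) (M := {k - j, k - j + 1}) (m := k - j) (by simp)
      (by omega) (by omega)
    omega

theorem exists_mem_optB_sup_eq_zero {S : Finset ℕ} (hk : S.sup id = 1) :
    ∃ T ∈ optB nimΓ S, T.sup id = 0 := by
  refine ⟨_, ⟨{1}, ⟨⟨by simp, fun m hm => ?_⟩, Or.inr fun m hm => ?_⟩, rfl⟩, ?_⟩
  · rw [Finset.mem_singleton.1 hm, moveLegal_nimΓ_iff]
    omega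
  · rw [moveLegal_nimΓ_iff] at hm
    simp only [Finset.mem_singleton]
    omega
  · have := sup_qApply_nimΓ_le (S := S) (M := {1}) 1 (by simp)
    omega

theorem sup_eq_one_of_mem_optB {S T : Finset ℕ} (hk : S.sup id = 2) (hT : T ∈ optB nimΓ S) :
    T.sup id = 1 := by
  have hlt := sup_lt_of_mem_optB hT
  obtain ⟨M, ⟨⟨-, hlegal⟩, hcard⟩, rfl⟩ := hT
  have hlegal' : ∀ m ∈ M, 1 ≤ m ∧ m ≤ 2 := fun m hm => hk ▸ moveLegal_nimΓ_iff.1 (hlegal m hm)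
  have h1M : 1 ∈ M := by
    rcases hcard with hcard | hall
    · obtain ⟨a, ha, b, hb, hab⟩ := Finset.one_lt_card.1 hcard
      have := hlegal' a ha
      have := hlegal' b hb
      obtain rfl | rfl : a = 1 ∨ b = 1 := by omega
      exacts [ha, hb]
    · exact hall 1 (moveLegal_nimΓ_iff.2 (by omega))
  have := sub_le_sup_qApply_nimΓ (S := S) h1M le_rfl (by omega)
  omega

def grundyB : ℕ → ℕ
  | 0 => 0
  | 1 => 1
  | 2 => 0
  | k + 3 => k + 2

theorem grundyB_of_three_le {k : ℕ} (hk : 3 ≤ k) : grundyB k = k - 1 := by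
  obtain ⟨k, rfl⟩ := Nat.exists_eq_add_of_le' hk
  simp [grundyB]

theorem grundyB_lt_of_three_le {j k : ℕ} (hk : 3 ≤ k) (hjk : j < k) : grundyB j < grundyB k := by
  rw [grundyB_of_three_le hk]
  rcases j with _ | _ | _ | j <;> simp [grundyB] <;> omega

theorem exists_grundyB_eq_of_lt {k n : ℕ} (hk : 3 ≤ k) (hn : n < grundyB k) :
    ∃ j, 1 ≤ j ∧ j < k ∧ grundyB j = n := by
  rw [grundyB_of_three_le hk] at hn
  rcases n with _ | _ | n
  · exact ⟨2, by omega, by omega, rfl⟩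
  · exact ⟨1, le_rfl, by omega, rfl⟩
  · exact ⟨n + 3, by omega, by omega, rfl⟩

theorem grundyB_ne_of_mem_optB {S T : Finset ℕ} (hT : T ∈ optB nimΓ S) :
    grundyB (T.sup id) ≠ grundyB (S.sup id) := by
  have hlt := sup_lt_of_mem_optB hT
  rcases Nat.lt_or_ge (S.sup id) 3 with hk | hk
  · obtain h | h | h : S.sup id = 0 ∨ S.sup id = 1 ∨ S.sup id = 2 := by omega
    · omega
    · rw [h, show T.sup id = 0 by omega]
      decide
    · rw [h, sup_eq_one_of_mem_optB h hT]
      decide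
  · exact (grundyB_lt_of_three_le hk hlt).ne

theorem exists_mem_optB_grundyB_eq {S : Finset ℕ} {n : ℕ} (hn : n < grundyB (S.sup id)) :
    ∃ T ∈ optB nimΓ S, grundyB (T.sup id) = n := by
  rcases Nat.lt_or_ge (S.sup id) 3 with hk | hk
  · obtain h | h | h : S.sup id = 0 ∨ S.sup id = 1 ∨ S.sup id = 2 := by omega
    · simp [h, grundyB] at hn
    · obtain rfl : n = 0 := by simpa [h, grundyB] using hn
      obtain ⟨T, hT, hT0⟩ := exists_mem_optB_sup_eq_zero h
      exact ⟨T, hT, by rw [hT0]; rfl⟩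
    · simp [h, grundyB] at hn
  · obtain ⟨j, hj, hjk, rfl⟩ := exists_grundyB_eq_of_lt hk hn
    obtain ⟨T, hT, rfl⟩ := exists_mem_optB_sup_eq hj hjk
    exact ⟨T, hT, rfl⟩

theorem hasGrundy_optB_grundyB (S : Finset ℕ) :
    HasGrundy (optB nimΓ) S (grundyB (S.sup id)) :=
  hasGrundy_of_mex (opt := optB nimΓ) (g := fun S => grundyB (S.sup id))
    (Subrelation.wf (fun h => sup_lt_of_mem_optB h) (InvImage.wf (Finset.sup · id) wellFounded_lt))
    (fun _ _ => grundyB_ne_of_mem_optB) (fun _ _ => exists_mem_optB_grundyB_eq) S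

/-- In Ruleset B of Quantum Nim, a superposition of single Nim
heaps whose largest heap has size `k` has Grundy value `1` if `k = 1`,
`0` if `k = 2`, and `k - 1` if `k ≥ 3`. -/
theorem rulesetB_single_heap_value (S : Finset ℕ) (hS : S.Nonempty) (k : ℕ)
    (hmax : S.max' hS = k) :
    (k = 1 → HasGrundy (optB nimΓ) S 1) ∧
    (k = 2 → HasGrundy (optB nimΓ) S 0) ∧
    (3 ≤ k → HasGrundy (optB nimΓ) S (k - 1)) := by
  have hsup : S.sup id = k := by rw [← hmax, Finset.max'_eq_sup', Finset.sup'_eq_sup]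
  have h := hasGrundy_optB_grundyB S
  rw [hsup] at h
  refine ⟨?_, ?_, fun hk => grundyB_of_three_le hk ▸ h⟩ <;> rintro rfl <;> exact h

end QGame
end

section
/- The octal game 0.6 played on a line of 4 pins has outcome P (second-player win) as a classical game, but has outcome N (first-player win) in each of the quantum Rulesets A, B, C, C' and D; in the quantum versions, the superposed first move {remove pin 1, remove pin 4} is a winning move. -/
namespace QGame

/-- The octal game 0.6 on a line of pins: remove a pin `i` still having at
least one adjacent pin. -/
def octΓ : Finset ℕ → ℕ → Option (Finset ℕ) := fun P i =>
  if i ∈ P ∧ ((i - 1) ∈ P ∨ (i + 1) ∈ P) then some (P.erase i) else none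

/-- Classical options of the octal game 0.6. -/
def octOpt (P : Finset ℕ) : Set (Finset ℕ) := {Q | ∃ i, octΓ P i = some Q}

/-- The initial line of four pins. -/
def oct4 : Finset ℕ := {1, 2, 3, 4}

/-! Classically, every move from four pins leaves three, from which the opponent can leave two
isolated pins. After the superposed move `{1, 4}` the position is `{{2,3,4}, {1,2,3}}`. Every
reply leaves only two-pin realisations, and whichever pin the reply removes, some realisation is
a pair of adjacent pins `{k, k+1}`; the Q-move `{k, k+1}` then leaves only single pins, where no
move is legal. The winner plays only Ruleset A moves and the loser can play only Ruleset D
moves, so the argument applies to every ruleset between A and D. -/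

section Rulesets

variable {Pos Move : Type} {Γ : Pos → Move → Option Pos} {S : Finset Pos} {M : Finset Move}

theorem QLegalA.qLegalB (h : QLegalA Γ S M) : QLegalB Γ S M := ⟨h.1, .inl h.2⟩

theorem QLegalA.qLegalC (h : QLegalA Γ S M) : QLegalC Γ S M := ⟨h.1, .inl h.2⟩

theorem QLegalA.qLegalC' (h : QLegalA Γ S M) : QLegalC' Γ S M := ⟨h.1, .inl h.2⟩

theorem QLegalA.qLegalD (h : QLegalA Γ S M) : QLegalD Γ S M := h.1

variable [DecidableEq Pos]

theorem mem_qApply {x : Pos} : x ∈ qApply Γ S M ↔ ∃ G ∈ S, ∃ m ∈ M, Γ G m = some x := by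
  simp [qApply, Option.mem_def]

variable (Γ) in
def BetweenAD (opt : Finset Pos → Set (Finset Pos)) : Prop :=
  ∀ S, optA Γ S ⊆ opt S ∧ opt S ⊆ optD Γ S

theorem betweenAD_optA : BetweenAD Γ (optA Γ) :=
  fun _ => ⟨subset_rfl, fun _ ⟨M, hM, hT⟩ => ⟨M, hM.qLegalD, hT⟩⟩

theorem betweenAD_optB : BetweenAD Γ (optB Γ) :=
  fun _ => ⟨fun _ ⟨M, hM, hT⟩ => ⟨M, hM.qLegalB, hT⟩, fun _ ⟨M, hM, hT⟩ => ⟨M, hM.1, hT⟩⟩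

theorem betweenAD_optC : BetweenAD Γ (optC Γ) :=
  fun _ => ⟨fun _ ⟨M, hM, hT⟩ => ⟨M, hM.qLegalC, hT⟩, fun _ ⟨M, hM, hT⟩ => ⟨M, hM.1, hT⟩⟩

theorem betweenAD_optC' : BetweenAD Γ (optC' Γ) :=
  fun _ => ⟨fun _ ⟨M, hM, hT⟩ => ⟨M, hM.qLegalC', hT⟩, fun _ ⟨M, hM, hT⟩ => ⟨M, hM.1, hT⟩⟩

theorem betweenAD_optD : BetweenAD Γ (optD Γ) :=
  fun _ => ⟨fun _ ⟨M, hM, hT⟩ => ⟨M, hM.qLegalD, hT⟩, fun _ => id⟩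

variable {opt : Finset Pos → Set (Finset Pos)}

theorem nPos_of_qLegalA (h : BetweenAD Γ opt) (hM : QLegalA Γ S M)
    (hP : PPos opt (qApply Γ S M)) : NPos opt S :=
  .mk S _ ((h S).1 ⟨M, hM, rfl⟩) hP

theorem pPos_of_forall_eq_none (h : BetweenAD Γ opt) (hS : ∀ G ∈ S, ∀ m, Γ G m = none) :
    PPos opt S := by
  intro T hT
  obtain ⟨M, ⟨⟨m, hm⟩, hlegal⟩, -⟩ := (h S).2 hT
  obtain ⟨G, hG, hsome⟩ := hlegal m hm
  simp [hS G hG m] at hsome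

theorem nPos_of_qApply_forall_eq_none (h : BetweenAD Γ opt) (hM : QLegalA Γ S M)
    (hT : ∀ G ∈ qApply Γ S M, ∀ m, Γ G m = none) : NPos opt S :=
  nPos_of_qLegalA h hM (pPos_of_forall_eq_none h hT)

end Rulesets

section Octal

variable {P Q : Finset ℕ} {i : ℕ}

theorem octΓ_eq_some (h : octΓ P i = some Q) : i ∈ P ∧ P.erase i = Q := by
  unfold octΓ at h
  split_ifs at h with hi
  exact ⟨hi.1, Option.some_injective _ h⟩

theorem mem_of_isSome_octΓ (h : (octΓ P i).isSome) : i ∈ P := by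
  obtain ⟨Q, hQ⟩ := Option.isSome_iff_exists.mp h
  exact (octΓ_eq_some hQ).1

theorem octΓ_eq_none_of_isolated (h : ∀ j ∈ P, j - 1 ∉ P ∧ j + 1 ∉ P) (i : ℕ) :
    octΓ P i = none :=
  if_neg fun ⟨hi, hadj⟩ => hadj.elim (h i hi).1 (h i hi).2

theorem pPos_octOpt_of_isolated (h : ∀ j ∈ P, j - 1 ∉ P ∧ j + 1 ∉ P) : PPos octOpt P := by
  rintro Q ⟨i, hi⟩
  simp [octΓ_eq_none_of_isolated h i] at hi

-- Pin `0` is excluded because `0 - 1 = 0` in `ℕ` makes it its own neighbour.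
theorem octΓ_eq_none_of_card_eq_one (hQ : Q.card = 1) (h0 : 0 ∉ Q) (i : ℕ) :
    octΓ Q i = none := by
  obtain ⟨j, rfl⟩ := Finset.card_eq_one.mp hQ
  refine octΓ_eq_none_of_isolated (fun k hk => ?_) i
  obtain rfl := Finset.mem_singleton.mp hk
  have hk0 : k ≠ 0 := fun hk0 => h0 (hk0 ▸ hk)
  simp only [Finset.mem_singleton]
  omega

theorem card_add_one_of_octΓ_eq_some (h : octΓ P i = some Q) : Q.card + 1 = P.card := by
  obtain ⟨hi, rfl⟩ := octΓ_eq_some h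
  exact Finset.card_erase_add_one hi

theorem subset_of_octΓ_eq_some (h : octΓ P i = some Q) : Q ⊆ P :=
  (octΓ_eq_some h).2 ▸ Finset.erase_subset i P

theorem qLegalA_adjacent_pair {S : Finset (Finset ℕ)} {k : ℕ} (hk : {k, k + 1} ∈ S) :
    QLegalA octΓ S {k, k + 1} := by
  have hlegal : ∀ m ∈ ({k, k + 1} : Finset ℕ), MoveLegal octΓ S m := by
    intro m hm
    refine ⟨_, hk, Option.isSome_iff_exists.mpr ⟨_, if_pos ⟨hm, ?_⟩⟩⟩
    rcases Finset.mem_insert.mp hm with rfl | hm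
    · simp
    · simp [Finset.mem_singleton.mp hm]
  exact ⟨⟨⟨k, by simp⟩, hlegal⟩, by simp⟩

theorem nPos_of_adjacent_pair {opt : Finset (Finset ℕ) → Set (Finset (Finset ℕ))}
    (h : BetweenAD octΓ opt) {S : Finset (Finset ℕ)} (hS : ∀ G ∈ S, G.card = 2 ∧ 0 ∉ G)
    {k : ℕ} (hk : {k, k + 1} ∈ S) : NPos opt S := by
  refine nPos_of_qApply_forall_eq_none h (qLegalA_adjacent_pair hk) fun Q hQ => ?_
  obtain ⟨G, hG, m, -, hm⟩ := mem_qApply.mp hQ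
  have hcard := card_add_one_of_octΓ_eq_some hm
  exact octΓ_eq_none_of_card_eq_one (by have := (hS G hG).1; omega)
    fun h0 => (hS G hG).2 (subset_of_octΓ_eq_some hm h0)
end Octal

theorem pPos_octOpt_oct4 : PPos octOpt oct4 := by
  rintro Q ⟨i, hi⟩
  obtain ⟨hi4, rfl⟩ := octΓ_eq_some hi
  simp only [oct4, Finset.mem_insert, Finset.mem_singleton] at hi4
  rcases hi4 with rfl | rfl | rfl | rfl
  · exact .mk _ {2, 4} ⟨3, by decide⟩ (pPos_octOpt_of_isolated (by decide))
  · exact .mk _ {1, 4} ⟨3, by decide⟩ (pPos_octOpt_of_isolated (by decide))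
  · exact .mk _ {1, 4} ⟨2, by decide⟩ (pPos_octOpt_of_isolated (by decide))
  · exact .mk _ {1, 3} ⟨2, by decide⟩ (pPos_octOpt_of_isolated (by decide))

theorem qLegalA_oct4_one_four : QLegalA octΓ {oct4} ({1, 4} : Finset ℕ) := by
  unfold QLegalA QBase MoveLegal
  decide

theorem qApply_oct4_one_four :
    qApply octΓ {oct4} ({1, 4} : Finset ℕ) = {{2, 3, 4}, {1, 2, 3}} := by
  decide

theorem pPos_two_lines_of_three {opt : Finset (Finset ℕ) → Set (Finset (Finset ℕ))}
    (h : BetweenAD octΓ opt) : PPos opt {{2, 3, 4}, {1, 2, 3}} := by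
  intro T hT
  obtain ⟨M, ⟨⟨m, hm⟩, hlegal⟩, rfl⟩ := (h _).2 hT
  have hpairs : ∀ G ∈ qApply octΓ {{2, 3, 4}, {1, 2, 3}} M, G.card = 2 ∧ 0 ∉ G := by
    intro G hG
    obtain ⟨G₀, hG₀, m', -, hm'⟩ := mem_qApply.mp hG
    have hcard := card_add_one_of_octΓ_eq_some hm'
    have hsub := subset_of_octΓ_eq_some hm'
    simp only [Finset.mem_insert, Finset.mem_singleton] at hG₀
    rcases hG₀ with rfl | rfl <;> exact ⟨by simpa using hcard, fun h0 => by simpa using hsub h0⟩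
  have hreach {G : Finset ℕ} {Q : Finset ℕ} (hG : G ∈ ({{2, 3, 4}, {1, 2, 3}} : Finset _))
      (hQ : octΓ G m = some Q) : Q ∈ qApply octΓ {{2, 3, 4}, {1, 2, 3}} M :=
    mem_qApply.mpr ⟨G, hG, m, hm, hQ⟩
  obtain ⟨G, hG, hsome⟩ := hlegal m hm
  have hm4 : m = 1 ∨ m = 2 ∨ m = 3 ∨ m = 4 := by
    have hmG := mem_of_isSome_octΓ hsome
    simp only [Finset.mem_insert, Finset.mem_singleton] at hG
    rcases hG with rfl | rfl <;> simp only [Finset.mem_insert, Finset.mem_singleton] at hmG <;> omega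
  rcases hm4 with rfl | rfl | rfl | rfl
  · exact nPos_of_adjacent_pair h hpairs (k := 2) (hreach (G := {1, 2, 3}) (by simp) (by decide))
  · exact nPos_of_adjacent_pair h hpairs (k := 3) (hreach (G := {2, 3, 4}) (by simp) (by decide))
  · exact nPos_of_adjacent_pair h hpairs (k := 1) (hreach (G := {1, 2, 3}) (by simp) (by decide))
  · exact nPos_of_adjacent_pair h hpairs (k := 2) (hreach (G := {2, 3, 4}) (by simp) (by decide))

/-- octal game 0.6 on four pins is a P-position classically,
but an N-position in each of the quantum Rulesets A, B, C, C' and D, the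
superposed first move `{remove pin 1, remove pin 4}` being a winning move. -/
theorem octal06_four_pins :
    PPos octOpt oct4 ∧
    (QLegalA octΓ {oct4} ({1, 4} : Finset ℕ) ∧
      PPos (optA octΓ) (qApply octΓ {oct4} ({1, 4} : Finset ℕ)) ∧
      NPos (optA octΓ) {oct4}) ∧
    (QLegalB octΓ {oct4} ({1, 4} : Finset ℕ) ∧
      PPos (optB octΓ) (qApply octΓ {oct4} ({1, 4} : Finset ℕ)) ∧
      NPos (optB octΓ) {oct4}) ∧
    (QLegalC octΓ {oct4} ({1, 4} : Finset ℕ) ∧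
      PPos (optC octΓ) (qApply octΓ {oct4} ({1, 4} : Finset ℕ)) ∧
      NPos (optC octΓ) {oct4}) ∧
    (QLegalC' octΓ {oct4} ({1, 4} : Finset ℕ) ∧
      PPos (optC' octΓ) (qApply octΓ {oct4} ({1, 4} : Finset ℕ)) ∧
      NPos (optC' octΓ) {oct4}) ∧
    (QLegalD octΓ {oct4} ({1, 4} : Finset ℕ) ∧
      PPos (optD octΓ) (qApply octΓ {oct4} ({1, 4} : Finset ℕ)) ∧
      NPos (optD octΓ) {oct4}) := by
  have hA := qLegalA_oct4_one_four
  have hwin {opt} (h : BetweenAD octΓ opt) :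
      PPos opt (qApply octΓ {oct4} ({1, 4} : Finset ℕ)) ∧ NPos opt {oct4} := by
    have hP : PPos opt (qApply octΓ {oct4} ({1, 4} : Finset ℕ)) := by
      rw [qApply_oct4_one_four]
      exact pPos_two_lines_of_three h
    exact ⟨hP, nPos_of_qLegalA h hA hP⟩
  exact ⟨pPos_octOpt_oct4, ⟨hA, hwin betweenAD_optA⟩, ⟨hA.qLegalB, hwin betweenAD_optB⟩,
    ⟨hA.qLegalC, hwin betweenAD_optC⟩, ⟨hA.qLegalC', hwin betweenAD_optC'⟩,
    ⟨hA.qLegalD, hwin betweenAD_optD⟩⟩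

end QGame
end
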